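/- A finite connected simple graph G is maximally independent of type 3 if and only if G is obtained from the complete graph K₂ by a finite sequence of Henneberg 1 and Henneberg 2 moves. -/

import Mathlib

open SimpleGraph

noncomputable section

/-- The freedom number `f(H) = 2|V(H)| - |E(H)|` of a subgraph. -/
def subFreedom {V : Type} {G : SimpleGraph V} (H : G.Subgraph) : ℤ :=
  2 * (H.verts.ncard : ℤ) - (H.edgeSet.ncard : ℤ)

/-- The freedom number `f(G) = 2|V| - |E|` of a graph. -/
def gFreedom {V : Type} (G : SimpleGraph V) : ℤ :=
  2 * ((Set.univ : Set V).ncard : ℤ) - (G.edgeSet.ncard : ℤ)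

/-- `G` is independent of type 2: every subgraph (with nonempty vertex set)
has freedom number at least 2. -/
def Indep2 {V : Type} (G : SimpleGraph V) : Prop :=
  ∀ H : G.Subgraph, H.verts.Nonempty → 2 ≤ subFreedom H

/-- `G` is maximally independent of type 2. -/
def MaxIndep2 {V : Type} (G : SimpleGraph V) : Prop := Indep2 G ∧ gFreedom G = 2

/-- `G` is independent of type 3: every subgraph with at least one edge
has freedom number at least 3. -/
def Indep3 {V : Type} (G : SimpleGraph V) : Prop :=
  ∀ H : G.Subgraph, H.edgeSet.Nonempty → 3 ≤ subFreedom H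

/-- `G` is maximally independent of type 3. -/
def MaxIndep3 {V : Type} (G : SimpleGraph V) : Prop := Indep3 G ∧ gFreedom G = 3

/-- A Laman graph: connected and maximally independent of type 3. -/
def Laman {V : Type} (G : SimpleGraph V) : Prop := G.Connected ∧ MaxIndep3 G

/-- Henneberg 1 move: `G'` (on vertex type `β`) is obtained from `G` (on `α`)
via the vertex embedding `φ` by adjoining the new vertex `w` joined to the images
of two distinct vertices `a`, `b` of `G`. -/
def Henneberg1Rel {α β : Type} (G : SimpleGraph α) (G' : SimpleGraph β)
    (φ : α ↪ β) (w : β) : Prop :=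
  (∀ y : β, y ∈ Set.range φ ∨ y = w) ∧ w ∉ Set.range φ ∧
  ∃ a b : α, a ≠ b ∧
    ∀ x y : β, G'.Adj x y ↔
      ((∃ c d : α, G.Adj c d ∧ x = φ c ∧ y = φ d) ∨
       (x = w ∧ (y = φ a ∨ y = φ b)) ∨ (y = w ∧ (x = φ a ∨ x = φ b)))

/-- Henneberg 2 move: `G'` is obtained from `G` by breaking the edge `(u,v)` of `G`
at the new vertex `w` and adding an edge from `w` to a third vertex `z`. -/
def Henneberg2Rel {α β : Type} (G : SimpleGraph α) (G' : SimpleGraph β)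
    (φ : α ↪ β) (w : β) : Prop :=
  (∀ y : β, y ∈ Set.range φ ∨ y = w) ∧ w ∉ Set.range φ ∧
  ∃ u v z : α, G.Adj u v ∧ z ≠ u ∧ z ≠ v ∧
    ∀ x y : β, G'.Adj x y ↔
      ((∃ a b : α, G.Adj a b ∧ ¬ (s(a, b) = s(u, v)) ∧ x = φ a ∧ y = φ b) ∨
       (x = w ∧ (y = φ u ∨ y = φ v ∨ y = φ z)) ∨
       (y = w ∧ (x = φ u ∨ x = φ v ∨ x = φ z)))

def finCastSuccEmb (n : ℕ) : Fin n ↪ Fin (n + 1) :=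
  ⟨Fin.castSucc, Fin.castSucc_injective n⟩

/-- `Derived G0 n G` : the graph `G` on `Fin n` is obtained from the base graph `G0`
by a finite sequence of Henneberg 1 and Henneberg 2 moves. -/
inductive Derived {m : ℕ} (G0 : SimpleGraph (Fin m)) : (n : ℕ) → SimpleGraph (Fin n) → Prop
  | base : Derived G0 m G0
  | h1 {n : ℕ} {G : SimpleGraph (Fin n)} {G' : SimpleGraph (Fin (n + 1))} :
      Derived G0 n G → Henneberg1Rel G G' (finCastSuccEmb n) (Fin.last n) →
      Derived G0 (n + 1) G'
  | h2 {n : ℕ} {G : SimpleGraph (Fin n)} {G' : SimpleGraph (Fin (n + 1))} :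
      Derived G0 n G → Henneberg2Rel G G' (finCastSuccEmb n) (Fin.last n) →
      Derived G0 (n + 1) G'

/-!
Write `i(S)` for the number of edges spanned by a vertex set `S`. Independence of type 3 is
Laman's count `i(S) ≤ 2|S| - 3` for all `|S| ≥ 2`, and maximality adds `|E| = 2|V| - 3`.

Both Henneberg moves add one vertex `w` and two edges, and a set containing `w` spans at most
two more edges than its trace on the old graph, so the counts are preserved.

Conversely, in a maximally independent graph every degree is at least 2 while the degrees sum to
`4|V| - 6`, so some vertex `w` has degree 2 or 3. Deleting `w` of degree 2 undoes a Henneberg 1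
move. If `w` has degree 3, deleting it and joining two of its neighbours `p, q` undoes a Henneberg
2 move, and keeps the count unless `p` and `q` lie in a common tight set (`i(S) = 2|S| - 3`)
avoiding `w`. Two tight sets sharing two vertices have a tight union, and so do three tight sets
meeting pairwise in single vertices. So if all three pairs of neighbours were blocked, some tight
set would contain all neighbours of `w`, and adding `w` to it would break the count.
-/

namespace SimpleGraph

section InducedEdges

variable {V W : Type*} {G : SimpleGraph V} {s t : Set V}

def inducedEdgeSet (G : SimpleGraph V) (s : Set V) : Set (Sym2 V) := G.edgeSet ∩ s.sym2

@[simp] lemma mk_mem_inducedEdgeSet {x y : V} :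
    s(x, y) ∈ G.inducedEdgeSet s ↔ G.Adj x y ∧ x ∈ s ∧ y ∈ s := Iff.rfl

lemma inducedEdgeSet_subset : G.inducedEdgeSet s ⊆ G.edgeSet := Set.inter_subset_left

@[simp] lemma inducedEdgeSet_univ : G.inducedEdgeSet Set.univ = G.edgeSet := by
  simp [inducedEdgeSet]

lemma inducedEdgeSet_mono (h : s ⊆ t) : G.inducedEdgeSet s ⊆ G.inducedEdgeSet t := by
  rintro ⟨x, y⟩ ⟨hxy, hx, hy⟩
  exact ⟨hxy, h hx, h hy⟩

lemma inducedEdgeSet_subset_of_le {H : SimpleGraph V} (h : G ≤ H) :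
    G.inducedEdgeSet s ⊆ H.inducedEdgeSet s :=
  Set.inter_subset_inter_left _ (edgeSet_mono h)

lemma inducedEdgeSet_inter :
    G.inducedEdgeSet (s ∩ t) = G.inducedEdgeSet s ∩ G.inducedEdgeSet t := by
  ext ⟨x, y⟩
  simp only [mk_mem_inducedEdgeSet, Set.mem_inter_iff]
  tauto

@[simp] lemma inducedEdgeSet_singleton (v : V) : G.inducedEdgeSet {v} = ∅ := by
  ext ⟨x, y⟩
  simp only [mk_mem_inducedEdgeSet, Set.mem_singleton_iff, Set.mem_empty_iff_false, iff_false]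
  rintro ⟨hxy, rfl, rfl⟩
  exact hxy.ne rfl

lemma inducedEdgeSet_pair_subset (a b : V) : G.inducedEdgeSet {a, b} ⊆ {s(a, b)} := by
  rintro ⟨x, y⟩ ⟨hxy, hx, hy⟩
  simp only [Set.mem_insert_iff, Set.mem_singleton_iff] at hx hy ⊢
  rcases hx with rfl | rfl <;> rcases hy with rfl | rfl
  exacts [absurd hxy (G.irrefl), rfl, Sym2.eq_swap, absurd hxy (G.irrefl)]

lemma inducedEdgeSet_insert {w : V} (hw : w ∉ s) :
    G.inducedEdgeSet (insert w s) =
      G.inducedEdgeSet s ∪ (fun v ↦ s(w, v)) '' (G.neighborSet w ∩ s) := by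
  ext ⟨x, y⟩
  simp only [mk_mem_inducedEdgeSet, Set.mem_insert_iff, Set.mem_union, Set.mem_image,
    Set.mem_inter_iff, mem_neighborSet, Sym2.eq_iff]
  constructor
  · rintro ⟨hxy, rfl | hx, rfl | hy⟩
    · exact absurd hxy (G.irrefl)
    · exact Or.inr ⟨y, ⟨hxy, hy⟩, Or.inl ⟨rfl, rfl⟩⟩
    · exact Or.inr ⟨x, ⟨hxy.symm, hx⟩, Or.inr ⟨rfl, rfl⟩⟩
    · exact Or.inl ⟨hxy, hx, hy⟩
  · rintro (⟨hxy, hx, hy⟩ | ⟨v, ⟨hwv, hv⟩, ⟨rfl, rfl⟩ | ⟨rfl, rfl⟩⟩)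
    · exact ⟨hxy, Or.inr hx, Or.inr hy⟩
    · exact ⟨hwv, Or.inl rfl, Or.inr hv⟩
    · exact ⟨hwv.symm, Or.inr hv, Or.inl rfl⟩

lemma ncard_inducedEdgeSet_insert [Finite V] {w : V} (hw : w ∉ s) :
    (G.inducedEdgeSet (insert w s)).ncard =
      (G.inducedEdgeSet s).ncard + (G.neighborSet w ∩ s).ncard := by
  rw [inducedEdgeSet_insert hw, Set.ncard_union_eq, Set.ncard_image_of_injective _
    (fun _ _ h ↦ (Sym2.congr_right.mp h))]
  rw [Set.disjoint_right]
  rintro _ ⟨v, -, rfl⟩ ⟨-, hw', -⟩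
  exact hw hw'

lemma inducedEdgeSet_image {H : SimpleGraph W} (f : G ↪g H) (s : Set V) :
    H.inducedEdgeSet (f '' s) = Sym2.map f '' G.inducedEdgeSet s := by
  ext e
  simp only [inducedEdgeSet, Set.sym2_image, Set.mem_inter_iff, Set.mem_image]
  constructor
  · rintro ⟨he, e', hs, rfl⟩
    exact ⟨e', ⟨(f.map_mem_edgeSet_iff).mp he, hs⟩, rfl⟩
  · rintro ⟨e', ⟨he, hs⟩, rfl⟩
    exact ⟨(f.map_mem_edgeSet_iff).mpr he, e', hs, rfl⟩

lemma ncard_inducedEdgeSet_image {H : SimpleGraph W} (f : G ↪g H) (s : Set V) :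
    (H.inducedEdgeSet (f '' s)).ncard = (G.inducedEdgeSet s).ncard := by
  rw [inducedEdgeSet_image, Set.ncard_image_of_injective _ (Sym2.map.injective f.injective)]

lemma ncard_inducedEdgeSet_add_le [Finite V] :
    (G.inducedEdgeSet s).ncard + (G.inducedEdgeSet t).ncard ≤
      (G.inducedEdgeSet (s ∪ t)).ncard + (G.inducedEdgeSet (s ∩ t)).ncard := by
  rw [← Set.ncard_union_add_ncard_inter, inducedEdgeSet_inter]
  exact Nat.add_le_add_right (Set.ncard_le_ncard (Set.union_subset
    (inducedEdgeSet_mono Set.subset_union_left) (inducedEdgeSet_mono Set.subset_union_right))) _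

lemma inducedEdgeSet_sup_edge {p q : V} (hpq : p ≠ q) :
    (G ⊔ edge p q).inducedEdgeSet s =
      G.inducedEdgeSet s ∪ ({s(p, q)} ∩ s.sym2) := by
  rw [inducedEdgeSet, edgeSet_sup, edgeSet_edge_of_ne hpq, Set.union_inter_distrib_right,
    inducedEdgeSet]

lemma ncard_inducedEdgeSet_sup_edge [Finite V] {p q : V} (hpq : p ≠ q) (hnadj : ¬ G.Adj p q)
    (hp : p ∈ s) (hq : q ∈ s) :
    ((G ⊔ edge p q).inducedEdgeSet s).ncard = (G.inducedEdgeSet s).ncard + 1 := by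
  rw [inducedEdgeSet_sup_edge hpq, Set.inter_eq_left.mpr (by simpa using ⟨hp, hq⟩),
    Set.union_singleton, Set.ncard_insert_of_notMem fun h ↦ hnadj (inducedEdgeSet_subset h)]

lemma ncard_edgeSet_sup_edge [Finite V] {p q : V} (hpq : p ≠ q) (hnadj : ¬ G.Adj p q) :
    (G ⊔ edge p q).edgeSet.ncard = G.edgeSet.ncard + 1 := by
  simpa using ncard_inducedEdgeSet_sup_edge (s := Set.univ) hpq hnadj trivial trivial

lemma inducedEdgeSet_sup_edge_of_notMem {p q : V} (hpq : p ≠ q) (h : ¬ (p ∈ s ∧ q ∈ s)) :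
    (G ⊔ edge p q).inducedEdgeSet s = G.inducedEdgeSet s := by
  rw [inducedEdgeSet_sup_edge hpq, Set.singleton_inter_eq_empty.mpr (by simpa using h),
    Set.union_empty]

lemma ncard_inducedEdgeSet_le_one [Finite V] (hs : s.ncard = 2) :
    (G.inducedEdgeSet s).ncard ≤ 1 := by
  obtain ⟨a, b, -, rfl⟩ := Set.ncard_eq_two.mp hs
  exact (Set.ncard_le_ncard (inducedEdgeSet_pair_subset a b)).trans_eq (Set.ncard_singleton _)

lemma Subgraph.edgeSet_subset_inducedEdgeSet (H : G.Subgraph) :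
    H.edgeSet ⊆ G.inducedEdgeSet H.verts := by
  rintro ⟨x, y⟩ h
  exact ⟨H.adj_sub h, H.edge_vert h, H.edge_vert h.symm⟩

lemma edgeSet_induce_top (s : Set V) :
    ((⊤ : G.Subgraph).induce s).edgeSet = G.inducedEdgeSet s := by
  ext ⟨x, y⟩
  simp only [Subgraph.mem_edgeSet, Subgraph.induce_adj, Subgraph.top_adj, mk_mem_inducedEdgeSet]
  tauto

end InducedEdges

section Sparse

variable {V W : Type*} {G : SimpleGraph V} {s t : Set V}

def IsLamanSparse (G : SimpleGraph V) : Prop :=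
  ∀ s : Set V, 2 ≤ s.ncard → (G.inducedEdgeSet s).ncard + 3 ≤ 2 * s.ncard

lemma IsLamanSparse.comap {H : SimpleGraph W} (hH : H.IsLamanSparse) (f : G ↪g H) :
    G.IsLamanSparse := by
  intro s hs
  have := hH (f '' s) (by rwa [Set.ncard_image_of_injective _ f.injective])
  rwa [ncard_inducedEdgeSet_image, Set.ncard_image_of_injective _ f.injective] at this

def IsTightSet (G : SimpleGraph V) (s : Set V) : Prop :=
  (G.inducedEdgeSet s).ncard + 3 = 2 * s.ncard

lemma isTightSet_pair {p q : V} (h : G.Adj p q) : G.IsTightSet {p, q} := by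
  have : G.inducedEdgeSet {p, q} = {s(p, q)} :=
    (inducedEdgeSet_pair_subset p q).antisymm (by simpa using h)
  rw [IsTightSet, this, Set.ncard_singleton, Set.ncard_pair h.ne]

lemma IsTightSet.union [Finite V] (hG : G.IsLamanSparse) (hs : G.IsTightSet s)
    (ht : G.IsTightSet t) (hst : 2 ≤ (s ∩ t).ncard) : G.IsTightSet (s ∪ t) := by
  have hsub := ncard_inducedEdgeSet_add_le (G := G) (s := s) (t := t)
  have hinter := hG _ hst
  have hunion := hG (s ∪ t) (hst.trans (Set.ncard_le_ncard
    (Set.inter_subset_left.trans Set.subset_union_left)))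
  have hcard := Set.ncard_union_add_ncard_inter s t
  unfold IsTightSet at *
  omega

/-- The induced edge sets of `A`, `B` and `C` are pairwise disjoint. -/
lemma IsTightSet.union_union [Finite V] (hG : G.IsLamanSparse) {A B C : Set V} {u v z : V}
    (hA : G.IsTightSet A) (hB : G.IsTightSet B) (hC : G.IsTightSet C) (hAB : A ∩ B = {u})
    (hAC : A ∩ C = {v}) (hBC : B ∩ C = {z}) (hvz : v ≠ z) : G.IsTightSet (A ∪ B ∪ C) := by
  have hdisj {X Y : Set V} {x : V} (h : X ∩ Y = {x}) :
      Disjoint (G.inducedEdgeSet X) (G.inducedEdgeSet Y) := by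
    rw [Set.disjoint_iff_inter_eq_empty, ← inducedEdgeSet_inter, h, inducedEdgeSet_singleton]
  have hedges : (G.inducedEdgeSet A).ncard + (G.inducedEdgeSet B).ncard +
      (G.inducedEdgeSet C).ncard ≤ (G.inducedEdgeSet (A ∪ B ∪ C)).ncard := by
    rw [← Set.ncard_union_eq (hdisj hAB), ← Set.ncard_union_eq
      (Set.disjoint_union_left.mpr ⟨hdisj hAC, hdisj hBC⟩)]
    exact Set.ncard_le_ncard (Set.union_subset (Set.union_subset
      (inducedEdgeSet_mono (Set.subset_union_left.trans Set.subset_union_left))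
      (inducedEdgeSet_mono (Set.subset_union_right.trans Set.subset_union_left)))
      (inducedEdgeSet_mono Set.subset_union_right))
  have hABC : (A ∪ B) ∩ C = {v, z} := by
    rw [Set.union_inter_distrib_right, hAC, hBC, Set.singleton_union]
  have hcardAB := Set.ncard_union_add_ncard_inter A B
  have hcardABC := Set.ncard_union_add_ncard_inter (A ∪ B) C
  rw [hAB, Set.ncard_singleton] at hcardAB
  rw [hABC, Set.ncard_pair hvz] at hcardABC
  unfold IsTightSet at *
  have := hG (A ∪ B ∪ C) (by omega)
  omega

lemma IsLamanSparse.exists_isTightSet_of_pairs [Finite V] (hG : G.IsLamanSparse)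
    {A B C : Set V} {u v z : V} (hA : G.IsTightSet A) (hB : G.IsTightSet B)
    (hC : G.IsTightSet C) (huA : u ∈ A) (hvA : v ∈ A) (huB : u ∈ B) (hzB : z ∈ B)
    (hvC : v ∈ C) (hzC : z ∈ C) (hvz : v ≠ z) :
    ∃ D, G.IsTightSet D ∧ u ∈ D ∧ v ∈ D ∧ z ∈ D := by
  by_cases hAB : 2 ≤ (A ∩ B).ncard
  · exact ⟨A ∪ B, hA.union hG hB hAB, .inl huA, .inl hvA, .inr hzB⟩
  by_cases hAC : 2 ≤ (A ∩ C).ncard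
  · exact ⟨A ∪ C, hA.union hG hC hAC, .inl huA, .inl hvA, .inr hzC⟩
  by_cases hBC : 2 ≤ (B ∩ C).ncard
  · exact ⟨B ∪ C, hB.union hG hC hBC, .inl huB, .inr hvC, .inl hzB⟩
  have singleton {X Y : Set V} {x : V} (hX : x ∈ X) (hY : x ∈ Y) (h : ¬ 2 ≤ (X ∩ Y).ncard) :
      X ∩ Y = {x} :=
    (Set.eq_of_subset_of_ncard_le (Set.singleton_subset_iff.mpr (Set.mem_inter hX hY))
      (by rw [Set.ncard_singleton]; omega)).symm
  exact ⟨A ∪ B ∪ C, hA.union_union hG hB hC (singleton huA huB hAB) (singleton hvA hvC hAC)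
    (singleton hzB hzC hBC) hvz, .inl (.inl huA), .inl (.inl hvA), .inl (.inr hzB)⟩

lemma IsLamanSparse.exists_isTightSet_of_not_isLamanSparse_sup_edge [Finite V]
    (hG : G.IsLamanSparse) {p q : V} (hpq : p ≠ q) (hnadj : ¬ G.Adj p q)
    (h : ¬ (G ⊔ edge p q).IsLamanSparse) : ∃ s, G.IsTightSet s ∧ p ∈ s ∧ q ∈ s := by
  simp only [IsLamanSparse, not_forall, not_le] at h
  obtain ⟨s, hs, hviol⟩ := h
  by_cases hmem : p ∈ s ∧ q ∈ s
  · rw [ncard_inducedEdgeSet_sup_edge hpq hnadj hmem.1 hmem.2] at hviol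
    have := hG s hs
    exact ⟨s, by unfold IsTightSet; omega, hmem⟩
  · rw [inducedEdgeSet_sup_edge_of_notMem hpq hmem] at hviol
    exact absurd (hG s hs) (not_le.mpr hviol)

lemma IsLamanSparse.exists_isLamanSparse_sup_edge [Finite V] (hG : G.IsLamanSparse)
    {u v z : V} (huv : u ≠ v) (huz : u ≠ z) (hvz : v ≠ z)
    (hno : ∀ s, G.IsTightSet s → u ∈ s → v ∈ s → z ∈ s → False) :
    ∃ p q r, ({p, q, r} : Set V) = {u, v, z} ∧ p ≠ q ∧ q ≠ r ∧ p ≠ r ∧ ¬ G.Adj p q ∧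
      (G ⊔ edge p q).IsLamanSparse := by
  by_contra hcon
  push Not at hcon
  have tight_of_pair {p q r : V} (hset : ({p, q, r} : Set V) = {u, v, z}) (hpq : p ≠ q)
      (hqr : q ≠ r) (hpr : p ≠ r) : ∃ s, G.IsTightSet s ∧ p ∈ s ∧ q ∈ s := by
    by_cases hadj : G.Adj p q
    · exact ⟨_, isTightSet_pair hadj, Or.inl rfl, Or.inr rfl⟩
    · exact hG.exists_isTightSet_of_not_isLamanSparse_sup_edge hpq hadj
        (hcon p q r hset hpq hqr hpr hadj)
  obtain ⟨A, hA, huA, hvA⟩ := tight_of_pair rfl huv hvz huz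
  obtain ⟨B, hB, huB, hzB⟩ := tight_of_pair (by rw [Set.pair_comm]) huz hvz.symm huv
  obtain ⟨C, hC, hvC, hzC⟩ := tight_of_pair (by rw [Set.pair_comm, Set.insert_comm])
    hvz huz.symm huv.symm
  obtain ⟨D, hD, huD, hvD, hzD⟩ :=
    hG.exists_isTightSet_of_pairs hA hB hC huA hvA huB hzB hvC hzC hvz
  exact hno D hD huD hvD hzD

end Sparse

section VertexDeletion

variable {α β : Type*} {G : SimpleGraph β} {φ : α ↪ β} {w : β}

lemma range_subtype_ne (w : β) : Set.range (Function.Embedding.subtype (· ≠ w)) = {w}ᶜ :=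
  Subtype.range_coe_subtype

lemma natCard_eq_add_one [Finite β] (hφ : Set.range φ = {w}ᶜ) :
    Nat.card β = Nat.card α + 1 := by
  rw [← Set.ncard_add_ncard_compl {w}, ← hφ, Set.ncard_range_of_injective φ.injective,
    Set.ncard_singleton, add_comm]

lemma image_preimage_neighborSet (hφ : Set.range φ = {w}ᶜ) :
    φ '' (φ ⁻¹' G.neighborSet w) = G.neighborSet w :=
  Set.image_preimage_eq_of_subset (hφ ▸ G.neighborSet_subset_compl w)

lemma ncard_preimage_neighborSet (hφ : Set.range φ = {w}ᶜ) :
    (φ ⁻¹' G.neighborSet w).ncard = (G.neighborSet w).ncard := by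
  rw [← Set.ncard_image_of_injective _ φ.injective, image_preimage_neighborSet hφ]

lemma ncard_inducedEdgeSet_image_comap (t : Set α) :
    (G.inducedEdgeSet (φ '' t)).ncard = ((G.comap φ).inducedEdgeSet t).ncard :=
  ncard_inducedEdgeSet_image (Embedding.comap φ G) t

lemma notMem_image_of_range_eq (hφ : Set.range φ = {w}ᶜ) (t : Set α) : w ∉ φ '' t := fun h ↦ by
  have := Set.image_subset_range φ t h
  rw [hφ] at this
  exact this rfl

lemma exists_neighborSet_eq_pair (hφ : Set.range φ = {w}ᶜ) (h2 : (G.neighborSet w).ncard = 2) :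
    ∃ a b, a ≠ b ∧ G.neighborSet w = {φ a, φ b} := by
  obtain ⟨a, b, hab, hN⟩ := Set.ncard_eq_two.mp ((ncard_preimage_neighborSet hφ).trans h2)
  exact ⟨a, b, hab, by rw [← image_preimage_neighborSet hφ, hN, Set.image_pair]⟩

lemma ncard_inducedEdgeSet_insert_image [Finite β] (hφ : Set.range φ = {w}ᶜ) (t : Set α) :
    (G.inducedEdgeSet (insert w (φ '' t))).ncard =
      ((G.comap φ).inducedEdgeSet t).ncard + (G.neighborSet w ∩ φ '' t).ncard := by
  rw [ncard_inducedEdgeSet_insert (notMem_image_of_range_eq hφ t), ncard_inducedEdgeSet_image_comap]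

lemma ncard_edgeSet_eq_ncard_edgeSet_comap_add [Finite β] (hφ : Set.range φ = {w}ᶜ) :
    G.edgeSet.ncard = (G.comap φ).edgeSet.ncard + (G.neighborSet w).ncard := by
  have := ncard_inducedEdgeSet_insert_image (G := G) hφ Set.univ
  rwa [Set.image_univ, hφ, ← Set.singleton_union, Set.union_compl_self, inducedEdgeSet_univ,
    inducedEdgeSet_univ, Set.inter_eq_left.mpr (G.neighborSet_subset_compl w)] at this

/-- Adding `w` to `φ '' t` would give a set `S` spanning `2|S| - 2` edges. -/
lemma IsLamanSparse.not_neighborSet_subset_image [Finite β] (hG : G.IsLamanSparse)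
    (hφ : Set.range φ = {w}ᶜ) (h3 : 3 ≤ (G.neighborSet w).ncard) {t : Set α}
    (ht : (G.comap φ).IsTightSet t) : ¬ G.neighborSet w ⊆ φ '' t := by
  intro hsub
  have hins := ncard_inducedEdgeSet_insert_image (G := G) hφ t
  rw [Set.inter_eq_left.mpr hsub] at hins
  have hcard : (insert w (φ '' t)).ncard = t.ncard + 1 := by
    rw [Set.ncard_insert_of_notMem (notMem_image_of_range_eq hφ t),
      Set.ncard_image_of_injective _ φ.injective]
  unfold IsTightSet at ht
  have := hG (insert w (φ '' t)) (by omega)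
  omega

/-- The counting step shared by both Henneberg moves, with `K = G - w`, resp. `K = G - w + pq`. -/
lemma isLamanSparse_of_comap [Finite β] (hφ : Set.range φ = {w}ᶜ) {K : SimpleGraph α}
    (hK : K.IsLamanSparse)
    (hle : ∀ t, ((G.comap φ).inducedEdgeSet t).ncard ≤ (K.inducedEdgeSet t).ncard)
    (hstar : ∀ t, ((G.comap φ).inducedEdgeSet t).ncard + (G.neighborSet w ∩ φ '' t).ncard ≤
      (K.inducedEdgeSet t).ncard + 2) :
    G.IsLamanSparse := by
  intro s hs
  set t := φ ⁻¹' s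
  have himage : φ '' t = s \ {w} := by
    rw [Set.image_preimage_eq_inter_range, hφ, Set.sdiff_eq]
  have hcard : t.ncard = (s \ {w}).ncard := by
    rw [← himage, Set.ncard_image_of_injective _ φ.injective]
  by_cases hw : w ∈ s
  · have hs' : insert w (φ '' t) = s := by
      rw [himage, Set.insert_sdiff_singleton, Set.insert_eq_of_mem hw]
    have := Set.ncard_sdiff_singleton_add_one hw
    rcases (show s.ncard = 2 ∨ 3 ≤ s.ncard by omega) with h2 | h3
    · have := ncard_inducedEdgeSet_le_one (G := G) h2
      omega
    · have hins := ncard_inducedEdgeSet_insert_image (G := G) hφ t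
      rw [hs'] at hins
      have := hstar t
      have := hK t (by omega)
      omega
  · have hs' : φ '' t = s := by rw [himage, Set.sdiff_singleton_eq_self hw]
    rw [← hs', ncard_inducedEdgeSet_image_comap, Set.ncard_image_of_injective _ φ.injective]
    rw [← hs', Set.ncard_image_of_injective _ φ.injective] at hs
    have := hle t
    have := hK t hs
    omega

end VertexDeletion

end SimpleGraph

section MaxIndep3

variable {V : Type} {G : SimpleGraph V}

lemma indep3_iff_isLamanSparse [Finite V] : Indep3 G ↔ G.IsLamanSparse := by
  constructor
  · intro h s hs
    rcases (G.inducedEdgeSet s).eq_empty_or_nonempty with he | he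
    · rw [he, Set.ncard_empty]
      omega
    · have := h _ (by rwa [edgeSet_induce_top])
      rw [subFreedom, edgeSet_induce_top, Subgraph.induce_verts] at this
      omega
  · rintro h H ⟨e, he⟩
    have hverts : 2 ≤ H.verts.ncard := by
      induction e with
      | _ x y =>
        rw [← Set.ncard_pair (H.adj_sub he).ne]
        exact Set.ncard_le_ncard (Set.pair_subset (H.edge_vert he) (H.edge_vert he.symm))
    have := Set.ncard_le_ncard H.edgeSet_subset_inducedEdgeSet
    have := h _ hverts
    rw [subFreedom]
    omega

lemma maxIndep3_iff [Finite V] :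
    MaxIndep3 G ↔ G.IsLamanSparse ∧ G.edgeSet.ncard + 3 = 2 * Nat.card V := by
  rw [MaxIndep3, indep3_iff_isLamanSparse, gFreedom, Set.ncard_univ]
  exact and_congr_right fun _ ↦ by omega

lemma maxIndep3_congr {W : Type} [Finite W] {H : SimpleGraph W} (e : G ≃g H) :
    MaxIndep3 G ↔ MaxIndep3 H := by
  have : Finite V := Finite.of_equiv W e.symm.toEquiv
  rw [maxIndep3_iff, maxIndep3_iff, Nat.card_congr e.toEquiv, ← Nat.card_coe_set_eq,
    ← Nat.card_coe_set_eq, Nat.card_congr e.mapEdgeSet]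
  exact and_congr_left fun _ ↦
    ⟨fun h ↦ h.comap e.symm.toEmbedding, fun h ↦ h.comap e.toEmbedding⟩

lemma maxIndep3_top_fin_two : MaxIndep3 (⊤ : SimpleGraph (Fin 2)) := by
  refine maxIndep3_iff.mpr ⟨fun s hs ↦ ?_, ?_⟩
  · have := Set.ncard_le_ncard (Set.subset_univ s)
    rw [Set.ncard_univ, Nat.card_eq_fintype_card, Fintype.card_fin] at this
    have := ncard_inducedEdgeSet_le_one (G := ⊤) (le_antisymm this hs)
    omega
  · rw [← coe_edgeFinset, Set.ncard_coe_finset, card_edgeFinset_top_eq_card_choose_two]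
    simp

end MaxIndep3

section VertexOfLowDegree

variable {α β : Type} {G : SimpleGraph β} {φ : α ↪ β} {w : β}

lemma maxIndep3_iff_maxIndep3_comap [Finite β] (hφ : Set.range φ = {w}ᶜ)
    (h2 : (G.neighborSet w).ncard = 2) : MaxIndep3 G ↔ MaxIndep3 (G.comap φ) := by
  have : Finite α := Finite.of_injective φ φ.injective
  rw [maxIndep3_iff, maxIndep3_iff, ncard_edgeSet_eq_ncard_edgeSet_comap_add hφ,
    natCard_eq_add_one hφ, h2]
  constructor
  · exact fun ⟨hG, hE⟩ ↦ ⟨hG.comap (Embedding.comap φ G), by omega⟩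
  · refine fun ⟨hK, hE⟩ ↦ ⟨isLamanSparse_of_comap hφ hK (fun _ ↦ le_rfl) fun t ↦ ?_, by omega⟩
    have := Set.ncard_le_ncard (Set.inter_subset_left (s := G.neighborSet w) (t := φ '' t))
    omega

lemma maxIndep3_of_maxIndep3_comap_sup_edge [Finite β] (hφ : Set.range φ = {w}ᶜ) {p q r : α}
    (hN : G.neighborSet w = {φ p, φ q, φ r}) (hpq : p ≠ q) (hqr : q ≠ r) (hpr : p ≠ r)
    (hnadj : ¬ G.Adj (φ p) (φ q)) (h : MaxIndep3 (G.comap φ ⊔ edge p q)) : MaxIndep3 G := by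
  have : Finite α := Finite.of_injective φ φ.injective
  have hE := ncard_edgeSet_sup_edge hpq (G := G.comap φ) hnadj
  have hpqr : ({p, q, r} : Set α).ncard = 3 := Set.ncard_eq_three.mpr ⟨_, _, _, hpq, hpr, hqr, rfl⟩
  have hN' : G.neighborSet w = φ '' {p, q, r} := by
    rw [hN, Set.image_insert_eq, Set.image_insert_eq, Set.image_singleton]
  have h3 : (G.neighborSet w).ncard = 3 := by
    rw [hN', Set.ncard_image_of_injective _ φ.injective, hpqr]
  rw [maxIndep3_iff] at h ⊢
  refine ⟨isLamanSparse_of_comap hφ h.1 (fun _ ↦ Set.ncard_le_ncard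
    (inducedEdgeSet_subset_of_le le_sup_left)) fun t ↦ ?_, ?_⟩
  · rw [hN', ← Set.image_inter φ.injective, Set.ncard_image_of_injective _ φ.injective]
    by_cases hmem : p ∈ t ∧ q ∈ t
    · rw [ncard_inducedEdgeSet_sup_edge hpq hnadj hmem.1 hmem.2]
      have := Set.ncard_le_ncard (Set.inter_subset_left (s := {p, q, r}) (t := t))
      omega
    · rw [inducedEdgeSet_sup_edge_of_notMem hpq hmem]
      have : {p, q, r} ∩ t ⊂ {p, q, r} := by
        refine (Set.ssubset_iff_of_subset Set.inter_subset_left).mpr ?_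
        by_cases hp : p ∈ t
        · exact ⟨q, by simp, fun h ↦ hmem ⟨hp, h.2⟩⟩
        · exact ⟨p, by simp, fun h ↦ hp h.2⟩
      have := Set.ncard_lt_ncard this
      omega
  · rw [ncard_edgeSet_eq_ncard_edgeSet_comap_add hφ, natCard_eq_add_one hφ, h3]
    omega

lemma exists_maxIndep3_comap_sup_edge [Finite β] (hφ : Set.range φ = {w}ᶜ) (hG : MaxIndep3 G)
    (h3 : (G.neighborSet w).ncard = 3) :
    ∃ p q r, G.neighborSet w = {φ p, φ q, φ r} ∧ p ≠ q ∧ q ≠ r ∧ p ≠ r ∧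
      ¬ G.Adj (φ p) (φ q) ∧ MaxIndep3 (G.comap φ ⊔ edge p q) := by
  have : Finite α := Finite.of_injective φ φ.injective
  rw [maxIndep3_iff] at hG
  obtain ⟨u, v, z, huv, huz, hvz, hN⟩ :=
    Set.ncard_eq_three.mp ((ncard_preimage_neighborSet hφ).trans h3)
  have hN' : G.neighborSet w = φ '' {u, v, z} := by rw [← hN, image_preimage_neighborSet hφ]
  obtain ⟨p, q, r, hset, hpq, hqr, hpr, hnadj, hsparse⟩ :=
    (hG.1.comap (Embedding.comap φ G)).exists_isLamanSparse_sup_edge huv huz hvz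
      fun t ht hu hv hz ↦ hG.1.not_neighborSet_subset_image hφ h3.ge ht
        (hN' ▸ Set.image_mono (Set.insert_subset hu (Set.pair_subset hv hz)))
  refine ⟨p, q, r, ?_, hpq, hqr, hpr, hnadj, maxIndep3_iff.mpr ⟨hsparse, ?_⟩⟩
  · rw [hN', ← hset, Set.image_insert_eq, Set.image_insert_eq, Set.image_singleton]
  · have := hG.2
    rw [ncard_edgeSet_eq_ncard_edgeSet_comap_add hφ, natCard_eq_add_one hφ, h3] at this
    rw [ncard_edgeSet_sup_edge hpq hnadj]
    omega

end VertexOfLowDegree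

section Reduction

variable {V : Type} {G : SimpleGraph V}

lemma MaxIndep3.two_le_ncard_neighborSet [Finite V] (h : MaxIndep3 G) (h3 : 3 ≤ Nat.card V)
    (w : V) : 2 ≤ (G.neighborSet w).ncard := by
  have hφ := range_subtype_ne w
  have hE := ncard_edgeSet_eq_ncard_edgeSet_comap_add (G := G) hφ
  have hV := natCard_eq_add_one hφ
  rw [maxIndep3_iff] at h
  have := h.1.comap (Embedding.comap (Function.Embedding.subtype (· ≠ w)) G) Set.univ
    (by rw [Set.ncard_univ]; omega)
  rw [inducedEdgeSet_univ, Set.ncard_univ] at this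
  omega

lemma MaxIndep3.exists_ncard_neighborSet_eq_two_or_three [Finite V] (h : MaxIndep3 G)
    (h3 : 3 ≤ Nat.card V) : ∃ w, (G.neighborSet w).ncard = 2 ∨ (G.neighborSet w).ncard = 3 := by
  classical
  have := Fintype.ofFinite V
  by_contra! hcon
  have hdeg (w : V) : 4 ≤ G.degree w := by
    have := h.two_le_ncard_neighborSet h3 w
    have := hcon w
    rw [← card_neighborSet_eq_degree, ← Nat.card_eq_fintype_card, Nat.card_coe_set_eq]
    omega
  have hsum := G.sum_degrees_eq_twice_card_edges
  have hle := Finset.card_nsmul_le_sum Finset.univ (fun w ↦ G.degree w) 4 fun w _ ↦ hdeg w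
  rw [maxIndep3_iff, ← coe_edgeFinset, Set.ncard_coe_finset] at h
  rw [Finset.card_univ, ← Nat.card_eq_fintype_card, smul_eq_mul] at hle
  omega

lemma MaxIndep3.eq_top_of_card_eq_two [Finite V] (h : MaxIndep3 G) (h2 : Nat.card V = 2) :
    G = ⊤ := by
  rw [maxIndep3_iff, h2] at h
  ext x y
  refine ⟨Adj.ne, fun hxy ↦ ?_⟩
  have huniv : ({x, y} : Set V) = Set.univ := Set.eq_of_subset_of_ncard_le (Set.subset_univ _)
    (by rw [Set.ncard_univ, h2, Set.ncard_pair hxy])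
  have hE : G.edgeSet = {s(x, y)} := Set.eq_of_subset_of_ncard_le
    (by simpa [huniv] using inducedEdgeSet_pair_subset (G := G) x y)
    (by rw [Set.ncard_singleton]; omega)
  rw [← mem_edgeSet, hE]
  rfl

end Reduction

section HennebergMoves

variable {α β : Type} {G : SimpleGraph α} {G' : SimpleGraph β} {φ : α ↪ β} {w : β}

lemma range_eq_compl_singleton_iff :
    ((∀ y, y ∈ Set.range φ ∨ y = w) ∧ w ∉ Set.range φ) ↔ Set.range φ = {w}ᶜ := by
  simp only [Set.ext_iff, Set.mem_compl_singleton_iff]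
  grind

lemma forall_adj_iff_iff_comap_eq_and_neighborSet_eq (hφ : Set.range φ = {w}ᶜ)
    (K : SimpleGraph α) (S : Set β) :
    (∀ x y, G'.Adj x y ↔ (∃ c d, K.Adj c d ∧ x = φ c ∧ y = φ d) ∨ (x = w ∧ y ∈ S) ∨
      (y = w ∧ x ∈ S)) ↔ G'.comap φ = K ∧ G'.neighborSet w = S := by
  have hφw (c : α) : w ≠ φ c := by
    simpa [hφ, eq_comm] using Set.mem_range_self (f := φ) c
  constructor
  · intro h
    constructor
    · ext c d
      simp [h, Ne.symm (hφw _)]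
    · ext y
      simp only [mem_neighborSet, h, hφw, false_and, and_false, exists_false, false_or, true_and]
      exact ⟨fun h' ↦ h'.elim id fun ⟨hy, hw⟩ ↦ hy ▸ hw, Or.inl⟩
  · rintro ⟨rfl, rfl⟩ x y
    have hcov (y : β) : (∃ c, φ c = y) ∨ y = w := by
      rw [← Set.mem_range, hφ]
      exact (em (y = w)).symm
    rcases hcov x with ⟨c, rfl⟩ | rfl <;> rcases hcov y with ⟨d, rfl⟩ | rfl <;>
      simp [hφw, Ne.symm (hφw _), adj_comm]

lemma henneberg1Rel_iff : Henneberg1Rel G G' φ w ↔ Set.range φ = {w}ᶜ ∧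
    ∃ a b, a ≠ b ∧ G'.comap φ = G ∧ G'.neighborSet w = {φ a, φ b} := by
  rw [Henneberg1Rel, ← and_assoc, range_eq_compl_singleton_iff]
  exact and_congr_right fun hφ ↦ exists₂_congr fun a b ↦
    and_congr_right fun _ ↦ forall_adj_iff_iff_comap_eq_and_neighborSet_eq hφ G {φ a, φ b}

lemma henneberg2Rel_iff : Henneberg2Rel G G' φ w ↔ Set.range φ = {w}ᶜ ∧
    ∃ u v z, G.Adj u v ∧ z ≠ u ∧ z ≠ v ∧ G'.comap φ = G.deleteEdges {s(u, v)} ∧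
      G'.neighborSet w = {φ u, φ v, φ z} := by
  rw [Henneberg2Rel, ← and_assoc, range_eq_compl_singleton_iff]
  refine and_congr_right fun hφ ↦ exists₃_congr fun u v z ↦ and_congr_right fun _ ↦
    and_congr_right fun _ ↦ and_congr_right fun _ ↦ ?_
  rw [← forall_adj_iff_iff_comap_eq_and_neighborSet_eq hφ]
  simp only [deleteEdges_adj, Set.mem_singleton_iff, Set.mem_insert_iff, and_assoc]

lemma Henneberg1Rel.maxIndep3 [Finite β] (h : Henneberg1Rel G G' φ w) (hG : MaxIndep3 G) :
    MaxIndep3 G' := by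
  obtain ⟨hφ, a, b, hab, rfl, hN⟩ := henneberg1Rel_iff.mp h
  exact (maxIndep3_iff_maxIndep3_comap hφ (by rw [hN, Set.ncard_pair (φ.injective.ne hab)])).mpr hG

lemma Henneberg2Rel.maxIndep3 [Finite β] (h : Henneberg2Rel G G' φ w) (hG : MaxIndep3 G) :
    MaxIndep3 G' := by
  obtain ⟨hφ, u, v, z, huv, hzu, hzv, hK, hN⟩ := henneberg2Rel_iff.mp h
  have hnadj : ¬ G'.Adj (φ u) (φ v) := by
    change ¬ (G'.comap φ).Adj u v
    simp [hK]
  refine maxIndep3_of_maxIndep3_comap_sup_edge hφ hN huv.ne hzv.symm hzu.symm hnadj ?_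
  rwa [hK, deleteEdges, ← edge, sdiff_sup_self, sup_edge_of_adj G huv]

lemma Derived.maxIndep3 {m n : ℕ} {G₀ : SimpleGraph (Fin m)} {G : SimpleGraph (Fin n)}
    (hG₀ : MaxIndep3 G₀) (h : Derived G₀ n G) : MaxIndep3 G := by
  induction h with
  | base => exact hG₀
  | h1 _ hrel ih => exact hrel.maxIndep3 ih
  | h2 _ hrel ih => exact hrel.maxIndep3 ih

end HennebergMoves

def HennebergConstructible {V : Type} (G : SimpleGraph V) : Prop :=
  ∃ (n : ℕ) (G' : SimpleGraph (Fin n)), Derived (⊤ : SimpleGraph (Fin 2)) n G' ∧ Nonempty (G ≃g G')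

section Construction

variable {V : Type} {G : SimpleGraph V} {w : V}

lemma HennebergConstructible.maxIndep3 (h : HennebergConstructible G) : MaxIndep3 G := by
  obtain ⟨n, G', hG', ⟨e⟩⟩ := h
  exact (maxIndep3_congr e).mpr (hG'.maxIndep3 maxIndep3_top_fin_two)

lemma range_finCastSuccEmb (n : ℕ) : Set.range (finCastSuccEmb n) = {Fin.last n}ᶜ := by
  ext i
  simp only [finCastSuccEmb, Function.Embedding.coeFn_mk, Fin.range_castSucc,
    Set.mem_ofPred_eq, Set.mem_compl_singleton_iff]
  exact ⟨fun h h' ↦ by simp [h'] at h, Fin.lt_last_iff_ne_last.mpr⟩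

lemma exists_equiv_fin_succ {n : ℕ} (e : {x // x ≠ w} ≃ Fin n) :
    ∃ χ : Fin (n + 1) ≃ V, χ (Fin.last n) = w ∧ ∀ x, χ (e x).castSucc = x := by
  classical
  exact ⟨finSuccEquivLast.trans (e.symm.optionCongr.trans (Equiv.optionSubtypeNe w)),
    by simp only [Equiv.trans_apply, finSuccEquivLast_last, Equiv.optionCongr_apply,
      Option.map_none, Equiv.optionSubtypeNe_none],
    fun x ↦ by simp only [Equiv.trans_apply, finSuccEquivLast_castSucc, Equiv.optionCongr_apply,
      Option.map_some, Equiv.symm_apply_apply, Equiv.optionSubtypeNe_some]⟩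

lemma HennebergConstructible.of_neighborSet_eq_pair {a b : {x // x ≠ w}} (hab : a ≠ b)
    (hN : G.neighborSet w = {↑a, ↑b})
    (h : HennebergConstructible (G.comap (Function.Embedding.subtype (· ≠ w)))) :
    HennebergConstructible G := by
  obtain ⟨n, G'', hG'', ⟨e⟩⟩ := h
  obtain ⟨χ, hlast, hcast⟩ := exists_equiv_fin_succ e.toEquiv
  simp only [RelIso.coe_fn_toEquiv] at hcast
  have hsymm (x : {x // x ≠ w}) : χ.symm x = (e x).castSucc := χ.symm_apply_eq.mpr (hcast x).symm
  refine ⟨n + 1, G.comap χ, hG''.h1 (henneberg1Rel_iff.mpr ⟨range_finCastSuccEmb n, e a, e b,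
    e.injective.ne hab, ?_, ?_⟩), ⟨(Iso.comap χ G).symm⟩⟩
  · ext i j
    obtain ⟨x, rfl⟩ := e.surjective i
    obtain ⟨y, rfl⟩ := e.surjective j
    simp only [comap_adj, finCastSuccEmb, Function.Embedding.coeFn_mk]
    rw [hcast, hcast, e.map_adj_iff]
    rfl
  · rw [neighborSet_comap, hlast, hN, ← χ.image_symm_eq_preimage, Set.image_pair, hsymm,
      hsymm]
    rfl

lemma HennebergConstructible.of_neighborSet_eq_triple {p q r : {x // x ≠ w}}
    (hN : G.neighborSet w = {↑p, ↑q, ↑r}) (hpq : p ≠ q) (hqr : q ≠ r) (hpr : p ≠ r)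
    (hnadj : ¬ G.Adj p q)
    (h : HennebergConstructible (G.comap (Function.Embedding.subtype (· ≠ w)) ⊔ edge p q)) :
    HennebergConstructible G := by
  obtain ⟨n, G'', hG'', ⟨e⟩⟩ := h
  obtain ⟨χ, hlast, hcast⟩ := exists_equiv_fin_succ e.toEquiv
  simp only [RelIso.coe_fn_toEquiv] at hcast
  have hsymm (x : {x // x ≠ w}) : χ.symm x = (e x).castSucc := χ.symm_apply_eq.mpr (hcast x).symm
  refine ⟨n + 1, G.comap χ, hG''.h2 (henneberg2Rel_iff.mpr ⟨range_finCastSuccEmb n, e p, e q, e r,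
    e.map_adj_iff.mpr (Or.inr (by simp [edge_adj, hpq])), e.injective.ne hpr.symm,
    e.injective.ne hqr.symm, ?_, ?_⟩), ⟨(Iso.comap χ G).symm⟩⟩
  · ext i j
    obtain ⟨x, rfl⟩ := e.surjective i
    obtain ⟨y, rfl⟩ := e.surjective j
    simp only [comap_adj, finCastSuccEmb, Function.Embedding.coeFn_mk, deleteEdges_adj,
      Set.mem_singleton_iff]
    rw [hcast, hcast, e.map_adj_iff, ← Sym2.map_mk, ← Sym2.map_mk,
      (Sym2.map.injective e.injective).eq_iff]
    simp only [sup_adj, comap_adj, edge_adj, Sym2.eq_iff, Function.Embedding.subtype_apply]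
    grind [G.adj_symm, Adj.ne]
  · rw [neighborSet_comap, hlast, hN, ← χ.image_symm_eq_preimage, Set.image_insert_eq,
      Set.image_pair, hsymm, hsymm, hsymm]
    rfl

end Construction

theorem MaxIndep3.hennebergConstructible {V : Type} [Finite V] {G : SimpleGraph V}
    (h : MaxIndep3 G) : HennebergConstructible G := by
  induction hn : Nat.card V using Nat.strong_induction_on generalizing V with
  | _ n ih =>
  have hE := (maxIndep3_iff.mp h).2
  rcases (show n = 2 ∨ 3 ≤ n by omega) with h2 | h3
  · rw [h.eq_top_of_card_eq_two (hn.trans h2)]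
    exact ⟨2, ⊤, .base, ⟨Iso.completeGraph (Finite.equivFinOfCardEq (hn.trans h2))⟩⟩
  obtain ⟨w, hw⟩ := h.exists_ncard_neighborSet_eq_two_or_three (hn ▸ h3)
  have hφ := range_subtype_ne w
  have hlt : Nat.card {x // x ≠ w} < n := by
    have := natCard_eq_add_one hφ
    omega
  rcases hw with hw | hw
  · obtain ⟨a, b, hab, hN⟩ := exists_neighborSet_eq_pair hφ hw
    exact .of_neighborSet_eq_pair hab hN
      (ih _ hlt ((maxIndep3_iff_maxIndep3_comap hφ hw).mp h) rfl)
  · obtain ⟨p, q, r, hN, hpq, hqr, hpr, hnadj, hK⟩ := exists_maxIndep3_comap_sup_edge hφ h hw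
    exact .of_neighborSet_eq_triple hN hpq hqr hpr hnadj (ih _ hlt hK rfl)

theorem maxIndep3_iff_derived_from_K2_general {V : Type} [Fintype V] (G : SimpleGraph V) :
    MaxIndep3 G ↔
      ∃ (n : ℕ) (G' : SimpleGraph (Fin n)),
        Derived (⊤ : SimpleGraph (Fin 2)) n G' ∧ Nonempty (G ≃g G') :=
  ⟨MaxIndep3.hennebergConstructible, HennebergConstructible.maxIndep3⟩

/-- A finite connected simple graph is maximally independent of
type 3 if and only if it is obtained from the complete graph `K₂` by a finite
sequence of Henneberg 1 and Henneberg 2 moves. -/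
theorem maxIndep3_iff_derived_from_K2 {V : Type} [Fintype V] (G : SimpleGraph V)
    (hconn : G.Connected) :
    MaxIndep3 G ↔
      ∃ (n : ℕ) (G' : SimpleGraph (Fin n)),
        Derived (⊤ : SimpleGraph (Fin 2)) n G' ∧ Nonempty (G ≃g G') :=
  maxIndep3_iff_derived_from_K2_general G
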